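/- Let λ₁, λ₂ > 0 and c > 0, and let R₁, R₂ be as in the context. Then for every r ≥ 0, ℙ( R₂ > r and c R₂ ≤ R₁ ) = ∫_{r}^{∞} 2 λ₂ · exp( −2 λ₂ t − π λ₁ c² t² ) dt. Consequently, conditioned on the event 𝓔₂ = {c R₂ ≤ R₁}, the serving distance R = R₂ has probability density f_R(r | 𝓔₂) = 2 λ₂ · exp(−2 λ₂ r − π λ₁ c² r²) / ℙ(𝓔₂). -/

import Mathlib

open MeasureTheory Real ProbabilityTheory
open Set Filter Topology ENNReal

/-!
`R₂` is exponential with rate `2λ₂` and independent of `R₁`, so conditioning on `R₂ = t` gives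
`ℙ(R₂ > r, c R₂ ≤ R₁) = ∫_r^∞ 2λ₂ e^{-2λ₂ t} ℙ(R₁ ≥ c t) dt`. The survival function of `R₁` is
continuous, hence `ℙ(R₁ ≥ c t) = ℙ(R₁ > c t) = e^{-π λ₁ c² t²}`, and the two exponentials combine
into the integrand.
-/

theorem measure_Ici_eq_of_measure_Ioi {α : Type*} [TopologicalSpace α] [LinearOrder α]
    [OrderTopology α] [DenselyOrdered α] [NoMinOrder α] [MeasurableSpace α] {μ : Measure α}
    {F : α → ℝ≥0∞} {x : α} (hF : ContinuousWithinAt F (Iio x) x)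
    (h : ∀ᶠ y in 𝓝[≤] x, μ (Ioi y) = F y) : μ (Ici x) = F x := by
  refine le_antisymm (ge_of_tendsto hF ?_) ?_
  · filter_upwards [nhdsWithin_mono x Iio_subset_Iic_self h, self_mem_nhdsWithin]
      with y hy hyx
    exact hy ▸ measure_mono (Ici_subset_Ioi.mpr hyx)
  · rw [← h.self_of_nhdsWithin self_mem_Iic]
    exact measure_mono Ioi_subset_Ici_self

theorem map_eq_expMeasure_of_measure_lt {Ω : Type*} [MeasurableSpace Ω] {P : Measure Ω}
    [IsProbabilityMeasure P] {X : Ω → ℝ} (hX : Measurable X) (hX_nonneg : ∀ ω, 0 ≤ X ω)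
    {b : ℝ} (hb : 0 < b)
    (hsurv : ∀ r : ℝ, 0 ≤ r → P {ω | r < X ω} = ENNReal.ofReal (exp (-(b * r)))) :
    P.map X = expMeasure b := by
  have := isProbabilityMeasure_expMeasure hb
  have := Measure.isProbabilityMeasure_map (μ := P) hX.aemeasurable
  refine Measure.eq_of_cdf _ _ (StieltjesFunction.ext fun r => ?_)
  rw [cdf_expMeasure_eq hb, cdf_eq_real, map_measureReal_apply hX measurableSet_Iic]
  split_ifs with hr
  · have hcompl : X ⁻¹' Iic r = {ω | r < X ω}ᶜ := by ext; simp
    rw [hcompl, probReal_compl_eq_one_sub (measurableSet_lt measurable_const hX),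
      measureReal_def, hsurv r hr, toReal_ofReal (exp_pos _).le]
  · have hempty : X ⁻¹' Iic r = ∅ := by
      ext ω; simpa using lt_of_lt_of_le (not_le.mp hr) (hX_nonneg ω)
    simp [hempty]

theorem setLIntegral_expMeasure {b : ℝ} {f : ℝ → ℝ≥0∞} (hf : Measurable f) {s : Set ℝ}
    (hs : MeasurableSet s) :
    ∫⁻ x in s, f x ∂expMeasure b = ∫⁻ x in s, exponentialPDF b x * f x :=
  setLIntegral_withDensity_eq_setLIntegral_mul _ (measurable_exponentialPDFReal b).ennreal_ofReal
    hf hs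

theorem ProbabilityTheory.IndepFun.measure_preimage_eq_lintegral_map {Ω α β : Type*}
    [MeasurableSpace Ω] [MeasurableSpace α] [MeasurableSpace β] {P : Measure Ω}
    [IsFiniteMeasure P] {X : Ω → α} {Y : Ω → β} (h : IndepFun X Y P) (hX : Measurable X)
    (hY : Measurable Y) {S : Set (α × β)} (hS : MeasurableSet S) :
    P ((fun ω => (X ω, Y ω)) ⁻¹' S) = ∫⁻ x, P.map Y (Prod.mk x ⁻¹' S) ∂P.map X := by
  rw [← Measure.prod_apply hS, ← (indepFun_iff_map_prod_eq_prod_map_map hX.aemeasurable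
    hY.aemeasurable).mp h, Measure.map_apply (hX.prodMk hY) hS]

theorem ProbabilityTheory.IndepFun.measure_lt_and_mul_le_eq_setLIntegral {Ω : Type*}
    [MeasurableSpace Ω] {P : Measure Ω} [IsFiniteMeasure P] {X Y : Ω → ℝ} (h : IndepFun X Y P)
    (hX : Measurable X) (hY : Measurable Y) (r c : ℝ) :
    P {ω | r < Y ω ∧ c * Y ω ≤ X ω} = ∫⁻ t in Ioi r, P.map X (Ici (c * t)) ∂P.map Y := by
  have hS : MeasurableSet {p : ℝ × ℝ | r < p.1 ∧ c * p.1 ≤ p.2} :=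
    (measurableSet_lt measurable_const measurable_fst).inter
      (measurableSet_le (measurable_fst.const_mul c) measurable_snd)
  change P ((fun ω => (Y ω, X ω)) ⁻¹' {p : ℝ × ℝ | r < p.1 ∧ c * p.1 ≤ p.2}) = _
  rw [h.symm.measure_preimage_eq_lintegral_map hY hX hS, ← lintegral_indicator measurableSet_Ioi]
  congr with t
  by_cases ht : r < t <;> simp [ht, Ici_def]

theorem serving_distance_density_tier_two {Ω : Type*} [MeasurableSpace Ω]
    (P : Measure Ω) [IsProbabilityMeasure P]
    (R₁ R₂ : Ω → ℝ) (hR₁ : Measurable R₁) (hR₂ : Measurable R₂)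
    (hindep : IndepFun R₁ R₂ P)
    (hR₂_nonneg : ∀ ω, 0 ≤ R₂ ω)
    (lam₁ lam₂ c : ℝ) (hlam₂ : 0 < lam₂) (hc : 0 < c)
    (hsurv₁ : ∀ r : ℝ, 0 ≤ r →
      P {ω | r < R₁ ω} = ENNReal.ofReal (Real.exp (-(π * lam₁ * r ^ 2))))
    (hsurv₂ : ∀ r : ℝ, 0 ≤ r →
      P {ω | r < R₂ ω} = ENNReal.ofReal (Real.exp (-(2 * lam₂ * r)))) :
    ∀ r : ℝ, 0 ≤ r →
      P {ω | r < R₂ ω ∧ c * R₂ ω ≤ R₁ ω}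
        = ENNReal.ofReal (∫ t in Set.Ioi r,
            2 * lam₂ * Real.exp (-(2 * lam₂ * t) - π * lam₁ * c ^ 2 * t ^ 2)) := by
  intro r hr
  have hlaw₂ : P.map R₂ = expMeasure (2 * lam₂) :=
    map_eq_expMeasure_of_measure_lt hR₂ hR₂_nonneg (by positivity) hsurv₂
  have hlaw₁ : ∀ x : ℝ, 0 < x →
      P.map R₁ (Ici x) = ENNReal.ofReal (exp (-(π * lam₁ * x ^ 2))) := by
    refine fun x hx => measure_Ici_eq_of_measure_Ioi (ENNReal.continuous_ofReal.comp
        (f := fun x => exp (-(π * lam₁ * x ^ 2))) (by fun_prop)).continuousWithinAt ?_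
    filter_upwards [Ioc_mem_nhdsLE hx] with y hy
    rw [Measure.map_apply hR₁ measurableSet_Ioi]
    exact hsurv₁ y hy.1.le
  have hjoint : P {ω | r < R₂ ω ∧ c * R₂ ω ≤ R₁ ω} = ∫⁻ t in Ioi r,
      ENNReal.ofReal (2 * lam₂ * exp (-(2 * lam₂ * t) - π * lam₁ * c ^ 2 * t ^ 2)) := by
    have ht_pos : ∀ t ∈ Ioi r, 0 < t := fun t ht => hr.trans_lt ht
    rw [hindep.measure_lt_and_mul_le_eq_setLIntegral hR₁ hR₂, hlaw₂,
      setLIntegral_congr_fun measurableSet_Ioi fun t ht => hlaw₁ _ (mul_pos hc (ht_pos t ht)),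
      setLIntegral_expMeasure (by fun_prop) measurableSet_Ioi]
    refine setLIntegral_congr_fun measurableSet_Ioi fun t ht => ?_
    rw [exponentialPDF_of_nonneg (ht_pos t ht).le, ← ENNReal.ofReal_mul (by positivity),
      mul_assoc, ← exp_add]
    ring_nf
  rw [hjoint, integral_eq_lintegral_of_nonneg_ae (ae_of_all _ fun t => by positivity)
    (by fun_prop), ofReal_toReal (hjoint ▸ measure_ne_top P _)]
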